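/- arXiv:1108.2991 — 5 statements merged into one kernel-verified Lean document; each statement's English description precedes it below -/
import Mathlib

section
/- Let a and b be positive integers and let g = gcd(a,b). Then S_{a,b} = (3a²b + 3ab² + a² − 3ab + b² − 6abg + g²)/(12a) − (b/a)·S_{b,a}. Equivalently, a·S_{a,b} + b·S_{b,a} = (3a²b + 3ab² + a² − 3ab + b² − 6abg + g²)/12. -/
/-!
Write `a i = b qᵢ + rᵢ` with `qᵢ = ⌊a i / b⌋`, `rᵢ = a i mod b` (`i < b`), and symmetrically
with the roles of `a` and `b` exchanged. Then `S_{a,b} = (a / b) Σ i² − Σ i qᵢ`, so the theorem is a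
reciprocity law for the sums `Σ i qᵢ` and `Σ j q'ⱼ`. Counting `Σ j` over the lattice points of
`[0, b) × [0, a)` on either side of the line `a i = b j` expresses `Σ j q'ⱼ` through `Σ qᵢ²` and
`Σ qᵢ`; the `g` lattice points on the line produce the `gcd` term. Summing the division
identity and its square relates `Σ qᵢ` and `Σ i qᵢ` to `Σ rᵢ`, `Σ qᵢ²` and `Σ rᵢ²`; the residues
`rᵢ` run `g` times through the multiples of `g` below `b`, which gives `Σ rᵢ` and `Σ rᵢ²` in
closed form.
-/

/-- For integers `a ≥ 0`, `b ≥ 1`, `S a b = Σ_{i=0}^{b-1} (i/b)·(a·i mod b)` as a rational. -/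
noncomputable def Sab (a b : ℕ) : ℚ :=
  ∑ i ∈ Finset.range b, (i : ℚ) / (b : ℚ) * ((a * i % b : ℕ) : ℚ)

open Finset

lemma sum_range_natCast (n : ℕ) : ∑ i ∈ range n, (i : ℚ) = n * (n - 1) / 2 := by
  induction n with
  | zero => simp
  | succ n ih => rw [sum_range_succ, ih]; push_cast; ring

lemma sum_range_natCast_sq (n : ℕ) :
    ∑ i ∈ range n, (i : ℚ) ^ 2 = n * (n - 1) * (2 * n - 1) / 6 := by
  induction n with
  | zero => simp
  | succ n ih => rw [sum_range_succ, ih]; push_cast; ring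

section Residues

variable {M : Type*} [AddCommMonoid M]

lemma sum_range_mul_mod (f : ℕ → M) (n g : ℕ) :
    ∑ i ∈ range (n * g), f (i % n) = g • ∑ i ∈ range n, f i := by
  induction g with
  | zero => simp
  | succ g ih =>
    rw [Nat.mul_succ, sum_range_add, ih, succ_nsmul]
    congr 1
    refine sum_congr rfl fun i hi => ?_
    rw [Nat.mul_add_mod_self_left, Nat.mod_eq_of_lt (mem_range.1 hi)]

lemma sum_range_coprime_mul_mod {a n : ℕ} (h : a.Coprime n) (f : ℕ → M) :
    ∑ i ∈ range n, f (a * i % n) = ∑ i ∈ range n, f i := by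
  rcases Nat.eq_zero_or_pos n with rfl | hn
  · simp
  have hmaps : Set.MapsTo (fun i => a * i % n) (range n : Set ℕ) (range n : Set ℕ) :=
    fun i _ => mem_range.2 (Nat.mod_lt _ hn)
  have hinj : Set.InjOn (fun i => a * i % n) (range n : Set ℕ) := fun i hi j hj hij =>
    (Nat.ModEq.cancel_left_of_coprime (Nat.coprime_comm.1 h) hij).eq_of_lt_of_lt
      (mem_range.1 hi) (mem_range.1 hj)
  exact sum_nbij _ hmaps hinj
    ((Set.Finite.injOn_iff_bijOn_of_mapsTo (finite_toSet _) hmaps).1 hinj).surjOn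
    fun _ _ => rfl

lemma sum_range_mul_mod_eq_gcd_nsmul (a b : ℕ) (f : ℕ → M) :
    ∑ i ∈ range b, f (a * i % b) = a.gcd b • ∑ k ∈ range (b / a.gcd b), f (a.gcd b * k) := by
  rcases Nat.eq_zero_or_pos b with rfl | hb
  · simp
  have hg : 0 < a.gcd b := Nat.gcd_pos_of_pos_right a hb
  obtain ⟨a₁, b₁, hcop, ha, hb'⟩ := Nat.exists_coprime a b
  generalize a.gcd b = g at *
  subst ha hb'
  have hmod : ∀ i, a₁ * g * i % (b₁ * g) = g * (a₁ * (i % b₁) % b₁) := fun i => by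
    rw [mul_right_comm, Nat.mul_mod_mul_right, Nat.mul_mod_mod, mul_comm]
  simp only [hmod, Nat.mul_div_cancel _ hg]
  rw [sum_range_mul_mod (fun k => f (g * (a₁ * k % b₁))),
    sum_range_coprime_mul_mod hcop (fun k => f (g * k))]

end Residues

lemma sum_range_mul_mod_natCast (a b : ℕ) :
    ∑ i ∈ range b, ((a * i % b : ℕ) : ℚ) = b * (b - a.gcd b) / 2 := by
  rw [sum_range_mul_mod_eq_gcd_nsmul a b (fun k => (k : ℚ))]
  obtain ⟨m, hm⟩ := Nat.gcd_dvd_right a b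
  generalize a.gcd b = g at hm ⊢
  subst hm
  rcases Nat.eq_zero_or_pos g with rfl | hg
  · simp
  rw [Nat.mul_div_cancel_left _ hg]
  push_cast
  rw [← mul_sum, sum_range_natCast, nsmul_eq_mul]
  ring

lemma sum_range_mul_mod_natCast_sq (a b : ℕ) :
    ∑ i ∈ range b, ((a * i % b : ℕ) : ℚ) ^ 2
      = b * (b - a.gcd b) * (2 * b - a.gcd b) / 6 := by
  rw [sum_range_mul_mod_eq_gcd_nsmul a b (fun k => (k : ℚ) ^ 2)]
  obtain ⟨m, hm⟩ := Nat.gcd_dvd_right a b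
  generalize a.gcd b = g at hm ⊢
  subst hm
  rcases Nat.eq_zero_or_pos g with rfl | hg
  · simp
  rw [Nat.mul_div_cancel_left _ hg]
  push_cast
  simp only [mul_pow]
  rw [← mul_sum, sum_range_natCast_sq, nsmul_eq_mul]
  ring

lemma sum_snd_filter_mul_eq_mul {a b : ℕ} (ha : 0 < a) (hb : 0 < b) :
    ∑ p ∈ (range b ×ˢ range a).filter (fun p => a * p.1 = b * p.2), (p.2 : ℚ)
      = a * (a.gcd b - 1) / 2 := by
  obtain ⟨a₁, b₁, hcop, ha', hb'⟩ := Nat.exists_coprime a b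
  generalize a.gcd b = g at *
  subst ha' hb'
  have hg : 0 < g := Nat.pos_of_mul_pos_left hb
  have hb₁ : 0 < b₁ := Nat.pos_of_mul_pos_right hb
  have hdiag : (range (b₁ * g) ×ˢ range (a₁ * g)).filter (fun p => a₁ * g * p.1 = b₁ * g * p.2)
      = (range g).image (fun t => (b₁ * t, a₁ * t)) := by
    ext ⟨i, j⟩
    simp only [mem_filter, mem_product, mem_range, mem_image, Prod.mk.injEq]
    constructor
    · rintro ⟨⟨hi, -⟩, h⟩
      have h' : a₁ * i = b₁ * j := by
        apply Nat.eq_of_mul_eq_mul_right hg; linarith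
      obtain ⟨t, rfl⟩ : b₁ ∣ i := hcop.symm.dvd_of_dvd_mul_left ⟨j, by linarith⟩
      refine ⟨t, by nlinarith, rfl, ?_⟩
      apply Nat.eq_of_mul_eq_mul_left hb₁; linarith
    · rintro ⟨t, ht, rfl, rfl⟩
      refine ⟨⟨by nlinarith, by nlinarith⟩, by ring⟩
  rw [hdiag, sum_image fun t _ t' _ h => Nat.eq_of_mul_eq_mul_left hb₁ (Prod.ext_iff.1 h).1]
  push_cast
  rw [← mul_sum, sum_range_natCast]
  ring

lemma filter_range_mul_le {a c n : ℕ} (ha : 0 < a) (hc : c < a * n) :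
    (range n).filter (fun i => a * i ≤ c) = range (c / a + 1) := by
  ext i
  simp only [mem_filter, mem_range, Nat.lt_succ_iff, Nat.le_div_iff_mul_le ha, mul_comm i a]
  constructor
  · exact fun h => h.2
  · exact fun h => ⟨by nlinarith, h⟩

/-- Count `j` over the lattice points `(i, j)` of `[0, b) × [0, a)` with `b j ≤ a i` by rows and
over those with `a i ≤ b j` by columns; the points on the line `a i = b j` are counted twice. -/
lemma sum_mul_div_reciprocity {a b : ℕ} (ha : 0 < a) (hb : 0 < b) :
    ∑ j ∈ range a, (j : ℚ) * (b * j / a : ℕ)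
      + (∑ i ∈ range b, ((a * i / b : ℕ) : ℚ) ^ 2 + ∑ i ∈ range b, ((a * i / b : ℕ) : ℚ)) / 2
      = (b - 1) * (a * (a - 1) / 2)
        + ∑ p ∈ (range b ×ˢ range a).filter (fun p => a * p.1 = b * p.2), (p.2 : ℚ) := by
  have hsplit : ∀ i j : ℕ, ((if b * j ≤ a * i then (j : ℚ) else 0)
      + if a * i ≤ b * j then (j : ℚ) else 0) = j + if a * i = b * j then (j : ℚ) else 0 := by
    intro i j
    split_ifs <;> first | (exfalso; omega) | ring
  have hrows : ∀ i ∈ range b, ∑ j ∈ range a, (if b * j ≤ a * i then (j : ℚ) else 0)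
      = ((a * i / b : ℕ) : ℚ) * ((a * i / b : ℕ) + 1) / 2 := by
    intro i hi
    rw [← sum_filter, filter_range_mul_le hb (by nlinarith [mem_range.1 hi]), sum_range_natCast]
    push_cast
    ring
  have hcols : ∀ j ∈ range a, ∑ i ∈ range b, (if a * i ≤ b * j then (j : ℚ) else 0)
      = (j : ℚ) * ((b * j / a : ℕ) + 1) := by
    intro j hj
    rw [← sum_filter, sum_const, filter_range_mul_le ha (by nlinarith [mem_range.1 hj]),
      card_range, nsmul_eq_mul]
    push_cast
    ring
  have hcount : ∑ j ∈ range a, (j : ℚ) * ((b * j / a : ℕ) + 1)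
      + ∑ i ∈ range b, ((a * i / b : ℕ) : ℚ) * ((a * i / b : ℕ) + 1) / 2
      = b * (a * (a - 1) / 2)
        + ∑ p ∈ (range b ×ˢ range a).filter (fun p => a * p.1 = b * p.2), (p.2 : ℚ) := by
    calc _ = ∑ i ∈ range b, ∑ j ∈ range a, ((if b * j ≤ a * i then (j : ℚ) else 0)
          + if a * i ≤ b * j then (j : ℚ) else 0) := by
          rw [← sum_congr rfl hrows, ← sum_congr rfl hcols, sum_comm, add_comm]
          simp only [sum_add_distrib]
      _ = _ := by
          simp only [hsplit, sum_add_distrib, sum_filter, sum_product, sum_const, card_range,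
            nsmul_eq_mul, sum_range_natCast]
  simp only [mul_add, mul_one, sum_add_distrib, ← sum_div, sq, sum_range_natCast] at hcount ⊢
  linarith

lemma natCast_div_add_mod (n b : ℕ) : (b : ℚ) * (n / b : ℕ) + (n % b : ℕ) = n := by
  exact_mod_cast Nat.div_add_mod n b

lemma Sab_eq_sub_sum_mul_div (a : ℕ) {b : ℕ} (hb : 0 < b) :
    Sab a b = a / b * ∑ i ∈ range b, (i : ℚ) ^ 2 - ∑ i ∈ range b, (i : ℚ) * (a * i / b : ℕ) := by
  rw [Sab, mul_sum, ← sum_sub_distrib]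
  refine sum_congr rfl fun i _ => ?_
  have := natCast_div_add_mod (a * i) b
  push_cast at this
  field_simp
  linear_combination (i : ℚ) * this

lemma two_mul_sum_mul_div (a b : ℕ) (s : Finset ℕ) :
    2 * a * b * ∑ i ∈ s, (i : ℚ) * (a * i / b : ℕ)
      = b ^ 2 * ∑ i ∈ s, ((a * i / b : ℕ) : ℚ) ^ 2 + a ^ 2 * ∑ i ∈ s, (i : ℚ) ^ 2
        - ∑ i ∈ s, ((a * i % b : ℕ) : ℚ) ^ 2 := by
  simp only [mul_sum, ← sum_add_distrib, ← sum_sub_distrib]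
  refine sum_congr rfl fun i _ => ?_
  have := natCast_div_add_mod (a * i) b
  push_cast at this
  linear_combination ((a * i % b : ℕ) + a * i - b * (a * i / b : ℕ) : ℚ) * this

lemma mul_sum_div_add_sum_mod (a b : ℕ) (s : Finset ℕ) :
    b * ∑ i ∈ s, ((a * i / b : ℕ) : ℚ) + ∑ i ∈ s, ((a * i % b : ℕ) : ℚ) = a * ∑ i ∈ s, (i : ℚ) := by
  simp only [mul_sum, ← sum_add_distrib]
  refine sum_congr rfl fun i _ => ?_
  have := natCast_div_add_mod (a * i) b
  push_cast at this
  linear_combination this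

theorem stmt0 (a b : ℕ) (ha : 0 < a) (hb : 0 < b) :
    Sab a b
      = (3 * (a : ℚ) ^ 2 * b + 3 * a * b ^ 2 + a ^ 2 - 3 * a * b + b ^ 2
          - 6 * a * b * (Nat.gcd a b : ℚ) + (Nat.gcd a b : ℚ) ^ 2) / (12 * a)
        - ((b : ℚ) / a) * Sab b a := by
  have hP := two_mul_sum_mul_div a b (range b)
  have hQ := mul_sum_div_add_sum_mod a b (range b)
  have hL := sum_mul_div_reciprocity ha hb
  rw [sum_snd_filter_mul_eq_mul ha hb] at hL
  rw [sum_range_mul_mod_natCast_sq, sum_range_natCast_sq] at hP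
  rw [sum_range_mul_mod_natCast, sum_range_natCast] at hQ
  rw [eq_sub_iff_add_eq, Sab_eq_sub_sum_mul_div a hb, Sab_eq_sub_sum_mul_div b ha,
    sum_range_natCast_sq, sum_range_natCast_sq]
  have hb' : (b : ℚ) ≠ 0 := by positivity
  field_simp
  rw [← mul_left_inj' hb']
  -- eliminates `Σ i qᵢ`, `Σ j q'ⱼ`, `Σ qᵢ²` and `Σ qᵢ`
  linear_combination (-36) * hP - 72 * (b : ℚ) ^ 2 * hL + 36 * (b : ℚ) * hQ
end

section
/- Let a ≥ 0 and b ≥ 1 be integers and let g = gcd(a,b). Then Σ_{i=0}^{b−1} (a·i mod b) = b·(b − g)/2. -/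
/-!
Write `a = a' g`, `b = b' g` with `a'`, `b'` coprime. Then `a i mod b = g (a' i mod b')`, which is
periodic in `i` with period `b'`, so the sum consists of `g` copies of `g ∑_{i<b'} (a' i mod b')`.
Since multiplication by `a'` permutes the residues modulo `b'`, the inner sum is
`0 + 1 + ⋯ + (b' - 1) = b' (b' - 1) / 2`, and the total is `g² b' (b' - 1) / 2 = b (b - g) / 2`.
-/

open Finset

theorem Function.Periodic.sum_range_mul {M : Type*} [AddCommMonoid M] {f : ℕ → M} {n : ℕ}
    (hf : Function.Periodic f n) (c : ℕ) :
    ∑ i ∈ range (c * n), f i = c • ∑ i ∈ range n, f i := by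
  induction c with
  | zero => simp
  | succ c ih =>
    rw [Nat.succ_mul, sum_range_add, ih, succ_nsmul]
    congr 1
    refine sum_congr rfl fun i _ => ?_
    simpa [add_comm] using hf.nat_mul c i

theorem Nat.sum_range_mul_mod_of_coprime {a n : ℕ} (h : Nat.Coprime a n) :
    ∑ i ∈ range n, a * i % n = ∑ i ∈ range n, i := by
  rcases Nat.eq_zero_or_pos n with rfl | hn
  · simp
  have hmaps : Set.MapsTo (fun i => a * i % n) (range n) (range n) :=
    fun i _ => mem_range.2 (Nat.mod_lt _ hn)
  have hinj : Set.InjOn (fun i => a * i % n) (range n) := by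
    intro i hi j hj hij
    have := Nat.ModEq.cancel_left_of_coprime (Nat.coprime_comm.1 h) hij
    rwa [Nat.ModEq, Nat.mod_eq_of_lt (mem_range.1 hi), Nat.mod_eq_of_lt (mem_range.1 hj)] at this
  have hbij := ((range n).finite_toSet.injOn_iff_bijOn_of_mapsTo hmaps).1 hinj
  exact sum_nbij (fun i => a * i % n) hmaps hinj hbij.surjOn fun _ _ => rfl

theorem Nat.two_mul_sum_range_mul_mod (a b : ℕ) :
    2 * ∑ i ∈ range b, a * i % b = b * (b - Nat.gcd a b) := by
  rcases Nat.eq_zero_or_pos b with rfl | hb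
  · simp
  obtain ⟨g, a', b', -, hcop, rfl, rfl⟩ := Nat.exists_coprime' (Nat.gcd_pos_of_pos_right a hb)
  have hperiodic : Function.Periodic (fun i => g * (a' * i % b')) b' := fun i => by
    simp only [mul_add, Nat.add_mul_mod_self_right]
  calc 2 * ∑ i ∈ range (b' * g), a' * g * i % (b' * g)
      = 2 * ∑ i ∈ range (g * b'), g * (a' * i % b') := by
        rw [mul_comm b']
        refine congrArg _ (sum_congr rfl fun i _ => ?_)
        rw [← Nat.mul_mod_mul_left]
        ring_nf
    _ = g * g * ((∑ i ∈ range b', i) * 2) := by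
        rw [hperiodic.sum_range_mul, ← mul_sum, Nat.sum_range_mul_mod_of_coprime hcop, smul_eq_mul]
        ring
    _ = b' * g * (b' * g - Nat.gcd (a' * g) (b' * g)) := by
        rw [sum_range_id_mul_two, Nat.gcd_mul_right, hcop.gcd_eq_one, one_mul, ← Nat.sub_one_mul]
        ring

theorem stmt2_general (a b : ℕ) :
    (∑ i ∈ Finset.range b, ((a * i % b : ℕ) : ℚ))
      = (b : ℚ) * ((b : ℚ) - (Nat.gcd a b : ℚ)) / 2 := by
  rcases Nat.eq_zero_or_pos b with rfl | hb
  · simp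
  have h : ((2 * ∑ i ∈ range b, a * i % b : ℕ) : ℚ) = ((b * (b - Nat.gcd a b) : ℕ) : ℚ) :=
    congrArg _ (Nat.two_mul_sum_range_mul_mod a b)
  push_cast [Nat.cast_sub (Nat.gcd_le_right a hb)] at h
  linarith

/-- `Σ_{i=0}^{b−1} (a·i mod b) = b·(b − gcd(a,b))/2`. -/
theorem stmt2 (a b : ℕ) (hb : 1 ≤ b) :
    (∑ i ∈ Finset.range b, ((a * i % b : ℕ) : ℚ))
      = (b : ℚ) * ((b : ℚ) - (Nat.gcd a b : ℚ)) / 2 :=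
  stmt2_general a b
end

section
/- Let a and b be positive integers. Then Σ_{i=0}^{b−1} Σ_{j=0}^{a−1} i·⌊i/b + j/a⌋ = Σ_{j=0}^{a−1} (1/2)·⌊b·j/a⌋·(2b − 1 − ⌊b·j/a⌋). -/
/-!
For fixed `j < a` put `m = ⌊b j / a⌋ ≤ b`. Since `0 ≤ i/b + j/a < 2`, the floor `⌊i/b + j/a⌋` is
`1` exactly when `(b - i) a ≤ b j`, i.e. when `i ≥ b - m`, and `0` otherwise. So the inner sum over
`i` is `∑_{i = b - m}^{b - 1} i = m (2b - 1 - m) / 2`.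
-/

open Finset

section

variable {K : Type*} [Field K] [LinearOrder K] [IsStrictOrderedRing K] [FloorRing K]

theorem Int.floor_eq_ite_of_nonneg_of_lt_two {x : K} (h0 : 0 ≤ x) (h2 : x < 2) :
    ⌊x⌋ = if 1 ≤ x then 1 else 0 := by
  split_ifs with h
  · rw [Int.floor_eq_iff]; push_cast; constructor <;> linarith
  · rw [Int.floor_eq_zero_iff]; exact ⟨h0, not_le.mp h⟩

theorem one_le_natCast_div_add_natCast_div_iff {a b i : ℕ} (j : ℕ) (ha : 0 < a) (hb : 0 < b)
    (hi : i ≤ b) : 1 ≤ (i : K) / b + (j : K) / a ↔ b ≤ i + b * j / a := by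
  have hb' : (0 : K) < b := by exact_mod_cast hb
  have ha' : (0 : K) < a := by exact_mod_cast ha
  have hsub : (1 : K) - i / b = ((b - i : ℕ) : K) / b := by
    rw [Nat.cast_sub hi]; field_simp
  rw [← sub_le_iff_le_add', hsub, div_le_div_iff₀ hb' ha', mul_comm (j : K)]
  norm_cast
  rw [← Nat.le_div_iff_mul_le ha]
  omega

theorem floor_natCast_div_add_natCast_div {a b i j : ℕ} (hi : i < b) (hj : j < a) :
    ⌊(i : K) / b + (j : K) / a⌋ = if b ≤ i + b * j / a then 1 else 0 := by
  have ha : 0 < a := by omega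
  have hb : 0 < b := by omega
  have hib : (i : K) / b < 1 := (div_lt_one (by exact_mod_cast hb)).mpr (by exact_mod_cast hi)
  have hja : (j : K) / a < 1 := (div_lt_one (by exact_mod_cast ha)).mpr (by exact_mod_cast hj)
  rw [Int.floor_eq_ite_of_nonneg_of_lt_two (by positivity) (by linarith)]
  exact if_congr (one_le_natCast_div_add_natCast_div_iff j ha hb hi.le) rfl rfl

theorem floor_natCast_mul_div_natCast (a b j : ℕ) : ⌊(b : K) * j / a⌋ = ((b * j / a : ℕ) : ℤ) := by
  rw [← Nat.cast_mul, Int.floor_div_natCast, Int.floor_natCast]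
  norm_cast

end

theorem sum_range_filter_le_add_natCast {K : Type*} [Field K] [CharZero K] {b m : ℕ}
    (hm : m ≤ b) : ∑ i ∈ range b with b ≤ i + m, (i : K) = m * (2 * b - 1 - m) / 2 := by
  obtain ⟨c, rfl⟩ := Nat.exists_eq_add_of_le' hm
  have hfilter : {i ∈ range (c + m) | c + m ≤ i + m} = Ico c (c + m) := by
    ext i; simp only [mem_filter, mem_range, mem_Ico]; omega
  have hgauss : ∑ k ∈ range m, (k : K) = m * (m - 1) / 2 := by
    have := congrArg (Nat.cast (R := K)) (sum_range_id_mul_two m)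
    cases m <;> push_cast [Nat.cast_sub, Nat.succ_sub_one] at this ⊢ <;> linear_combination this / 2
  rw [hfilter, sum_Ico_eq_sum_range, Nat.add_sub_cancel_left]
  push_cast
  rw [sum_add_distrib, hgauss, sum_const, card_range, nsmul_eq_mul]
  ring

theorem stmt6_general (a b : ℕ) :
    (∑ i ∈ Finset.range b, ∑ j ∈ Finset.range a,
        (i : ℚ) * ((⌊(i : ℚ) / (b : ℚ) + (j : ℚ) / (a : ℚ)⌋ : ℤ) : ℚ))
      = ∑ j ∈ Finset.range a,
          (1 / 2 : ℚ) * ((⌊((b : ℚ) * (j : ℚ)) / (a : ℚ)⌋ : ℤ) : ℚ)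
            * (2 * (b : ℚ) - 1 - ((⌊((b : ℚ) * (j : ℚ)) / (a : ℚ)⌋ : ℤ) : ℚ)) := by
  rw [sum_comm]
  refine sum_congr rfl fun j hj => ?_
  have hm : b * j / a ≤ b :=
    Nat.div_le_of_le_mul (by rw [mul_comm a]; exact Nat.mul_le_mul_left b (mem_range.mp hj).le)
  rw [floor_natCast_mul_div_natCast, Int.cast_natCast, one_div_mul_eq_div, div_mul_eq_mul_div,
    ← sum_range_filter_le_add_natCast hm, sum_filter]
  refine sum_congr rfl fun i hi => ?_
  rw [floor_natCast_div_add_natCast_div (mem_range.mp hi) (mem_range.mp hj)]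
  split_ifs <;> simp

/-- `Σ_{i=0}^{b−1} Σ_{j=0}^{a−1} i·⌊i/b + j/a⌋
  = Σ_{j=0}^{a−1} (1/2)·⌊b·j/a⌋·(2b − 1 − ⌊b·j/a⌋)`. -/
theorem stmt6 (a b : ℕ) (ha : 0 < a) (hb : 0 < b) :
    (∑ i ∈ Finset.range b, ∑ j ∈ Finset.range a,
        (i : ℚ) * ((⌊(i : ℚ) / (b : ℚ) + (j : ℚ) / (a : ℚ)⌋ : ℤ) : ℚ))
      = ∑ j ∈ Finset.range a,
          (1 / 2 : ℚ) * ((⌊((b : ℚ) * (j : ℚ)) / (a : ℚ)⌋ : ℤ) : ℚ)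
            * (2 * (b : ℚ) - 1 - ((⌊((b : ℚ) * (j : ℚ)) / (a : ℚ)⌋ : ℤ) : ℚ)) :=
  stmt6_general a b
end

section
/- Let d ≥ 1, let f : ℝ^d → ℝ be a bounded Lebesgue-measurable function with compact support, let s ∈ ℤ^d be a nonzero integer vector, and let n ≥ 1 be an integer. Then Σ_{x ∈ ℤ^d} ∫_0^1 f(x + λ·n·s) dλ = Σ_{x ∈ ℤ^d} ∫_0^1 f(x + λ·s) dλ (both sums have only finitely many nonzero terms). In particular, the lattice bond sum Σ_{x ∈ ℤ^d} ∫_0^1 f(x + λr) dλ associated with a nonzero direction r ∈ ℤ^d is unchanged when r is replaced by r/gcd(r_1,…,r_d). -/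
/-!
Substituting `u = n t` turns the bond integral along `n s` into `n⁻¹ ∫_0^n`, and splitting `[0, n]`
into unit intervals writes it as the average of the `n` bond integrals along `s` starting at the
translates `x + k s`, `0 ≤ k < n`. Summing over `x ∈ ℤ^d`, each of these `n` sums is the bond sum
along `s` reindexed by a translation of the lattice. All sums are finite because `f` has compact
support, so the bonds meeting its support start in a bounded set of lattice points.
-/

open MeasureTheory Topology

open Finset in
theorem intervalIntegral.integral_comp_nat_mul {g : ℝ → ℝ} {n : ℕ} (hn : n ≠ 0)
    (hg : IntervalIntegrable g volume 0 n) :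
    ∫ t in (0:ℝ)..1, g (n * t) = (n : ℝ)⁻¹ * ∑ k ∈ range n, ∫ t in (0:ℝ)..1, g (t + k) := by
  have hsub : ∀ k < n, IntervalIntegrable g volume k (k + 1 : ℕ) := fun k hk => by
    refine hg.mono_set (Set.uIcc_subset_uIcc ?_ ?_) <;> rw [Set.uIcc_of_le (Nat.cast_nonneg n)] <;>
      exact ⟨by positivity, by exact_mod_cast (by omega)⟩
  rw [intervalIntegral.integral_comp_mul_left g (Nat.cast_ne_zero.2 hn), smul_eq_mul, mul_zero,
    mul_one, ← Nat.cast_zero, ← intervalIntegral.sum_integral_adjacent_intervals hsub]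
  congr 1
  refine sum_congr rfl fun k _ => ?_
  rw [intervalIntegral.integral_comp_add_right]
  push_cast
  ring_nf

theorem tsum_sum_comp_add_right {G α ι : Type*} [AddGroup G] [AddCommMonoid α]
    [TopologicalSpace α] [T2Space α] [ContinuousAdd α] {F : G → α} (hF : Summable F)
    (S : Finset ι) (a : ι → G) :
    ∑' x, ∑ k ∈ S, F (x + a k) = S.card • ∑' x, F x := by
  have hshift (k : ι) : Summable fun x => F (x + a k) := (Equiv.addRight (a k)).summable_iff.2 hF
  rw [Summable.tsum_finsetSum fun k _ => hshift k]
  have htsum_shift (k : ι) : ∑' x, F (x + a k) = ∑' x, F x := (Equiv.addRight (a k)).tsum_eq F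
  rw [Finset.sum_congr rfl fun k _ => htsum_shift k, Finset.sum_const]

variable {ι : Type*}

noncomputable def bondAverage (f : (ι → ℝ) → ℝ) (v : ι → ℝ) (x : ι → ℤ) : ℝ :=
  ∫ t in (0:ℝ)..1, f (fun i => (x i : ℝ) + t * v i)

theorem finite_setOf_bondAverage_ne_zero [Finite ι] {f : (ι → ℝ) → ℝ}
    (hf : HasCompactSupport f) (v : ι → ℝ) : {x : ι → ℤ | bondAverage f v x ≠ 0}.Finite := by
  set K := (fun p : (ι → ℝ) × ℝ => p.1 - p.2 • v) '' (tsupport f ×ˢ Set.Icc 0 1)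
  have hK : IsCompact K := (hf.isCompact.prod isCompact_Icc).image (by fun_prop)
  have hemb : IsClosedEmbedding (Pi.map fun _ => ((↑) : ℤ → ℝ) : (ι → ℤ) → ι → ℝ) :=
    .piMap fun _ => Int.isClosedEmbedding_coe_real
  refine (hemb.isCompact_preimage hK).finite_of_discrete.subset fun x hx => ?_
  by_contra hxK
  refine hx ((intervalIntegral.integral_congr fun t ht => ?_).trans intervalIntegral.integral_zero)
  refine image_eq_zero_of_notMem_tsupport fun hmem => hxK ⟨(_, t), ⟨hmem, ?_⟩, ?_⟩
  · simpa [Set.uIcc_of_le zero_le_one] using ht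
  · ext i; simp

theorem bondAverage_nat_mul {f : (ι → ℝ) → ℝ} (hmeas : Measurable f) {C : ℝ}
    (hbd : ∀ y, |f y| ≤ C) (s : ι → ℤ) {n : ℕ} (hn : n ≠ 0) (x : ι → ℤ) :
    bondAverage f (fun i => n * s i) x
      = (n : ℝ)⁻¹ * ∑ k ∈ Finset.range n, bondAverage f (fun i => s i) (x + k • s) := by
  set g : ℝ → ℝ := fun u => f (fun i => x i + u * s i)
  have hg : IntervalIntegrable g volume 0 n :=
    intervalIntegrable_const.mono_fun' (hmeas.comp (by fun_prop)).aestronglyMeasurable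
      (ae_of_all _ fun _ => hbd _)
  rw [bondAverage, ← Finset.sum_congr rfl fun k _ => ?_,
    ← intervalIntegral.integral_comp_nat_mul hn hg]
  · refine intervalIntegral.integral_congr fun t _ => congrArg f (funext fun i => ?_)
    ring
  · refine intervalIntegral.integral_congr fun t _ => congrArg f (funext fun i => ?_)
    rw [Pi.add_apply, Pi.smul_apply, nsmul_eq_mul]
    push_cast
    ring

theorem stmt9_general (d : ℕ) (f : (Fin d → ℝ) → ℝ)
    (hmeas : Measurable f) (C : ℝ) (hbd : ∀ y, |f y| ≤ C)
    (hsupp : HasCompactSupport f)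
    (s : Fin d → ℤ) (n : ℕ) (hn : 1 ≤ n) :
    {x : Fin d → ℤ |
        (∫ t in (0:ℝ)..1, f (fun i => (x i : ℝ) + t * ((n : ℝ) * (s i : ℝ)))) ≠ 0}.Finite
    ∧ {x : Fin d → ℤ |
        (∫ t in (0:ℝ)..1, f (fun i => (x i : ℝ) + t * (s i : ℝ))) ≠ 0}.Finite
    ∧ (∑' x : Fin d → ℤ, ∫ t in (0:ℝ)..1, f (fun i => (x i : ℝ) + t * ((n : ℝ) * (s i : ℝ))))
      = ∑' x : Fin d → ℤ, ∫ t in (0:ℝ)..1, f (fun i => (x i : ℝ) + t * (s i : ℝ)) := by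
  have hn0 : n ≠ 0 := by omega
  have hfin := finite_setOf_bondAverage_ne_zero hsupp (fun i => (s i : ℝ))
  refine ⟨finite_setOf_bondAverage_ne_zero hsupp _, hfin, ?_⟩
  change ∑' x, bondAverage f (fun i => n * s i) x = ∑' x, bondAverage f (fun i => s i) x
  simp_rw [bondAverage_nat_mul hmeas hbd s hn0, tsum_mul_left,
    tsum_sum_comp_add_right (summable_of_hasFiniteSupport hfin), Finset.card_range, nsmul_eq_mul]
  field_simp

/-- Scaling invariance of lattice bond sums: for a bounded measurable compactly supported
`f : ℝ^d → ℝ`, a nonzero direction `s ∈ ℤ^d` and an integer `n ≥ 1`, both bond sums have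
finitely many nonzero terms and
`Σ_{x ∈ ℤ^d} ∫_0^1 f(x + λ·n·s) dλ = Σ_{x ∈ ℤ^d} ∫_0^1 f(x + λ·s) dλ`.
In particular the bond sum for a direction `r` is unchanged when `r` is replaced by
`r / gcd(r_1,…,r_d)`. -/
theorem stmt9 (d : ℕ) (hd : 1 ≤ d) (f : (Fin d → ℝ) → ℝ)
    (hmeas : Measurable f) (C : ℝ) (hbd : ∀ y, |f y| ≤ C)
    (hsupp : HasCompactSupport f)
    (s : Fin d → ℤ) (hs : s ≠ 0) (n : ℕ) (hn : 1 ≤ n) :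
    {x : Fin d → ℤ |
        (∫ t in (0:ℝ)..1, f (fun i => (x i : ℝ) + t * ((n : ℝ) * (s i : ℝ)))) ≠ 0}.Finite
    ∧ {x : Fin d → ℤ |
        (∫ t in (0:ℝ)..1, f (fun i => (x i : ℝ) + t * (s i : ℝ))) ≠ 0}.Finite
    ∧ (∑' x : Fin d → ℤ, ∫ t in (0:ℝ)..1, f (fun i => (x i : ℝ) + t * ((n : ℝ) * (s i : ℝ))))
      = ∑' x : Fin d → ℤ, ∫ t in (0:ℝ)..1, f (fun i => (x i : ℝ) + t * (s i : ℝ)) :=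
  stmt9_general d f hmeas C hbd hsupp s n hn
end

section
/- Let d ≥ 1, let R ⊂ ℤ^d \ {0} be a finite set of bond directions, let L ⊂ ℤ^d be a finite set of lattice sites, and let F be a real d×d matrix. Let φ : ℝ^d → ℝ be differentiable at F·r for every r ∈ R, and define the atomistic energy E(y) := Σ_{x ∈ L} Σ_{r ∈ R, x+r ∈ L} φ(y(x+r) − y(x)) for maps y : ℤ^d → ℝ^d. Let y_F(x) := F·x be the uniform deformation, and let v : ℤ^d → ℝ^d be a displacement such that v(x) = 0 for every x ∈ L for which there exists r ∈ R with x + r ∉ L or x − r ∉ L. Then the function α ↦ E(y_F + α·v) is differentiable at α = 0 with derivative 0; i.e., the uniform deformation y_F is an equilibrium of the atomistic model with respect to all such admissible displacements. -/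
/-! At the uniform deformation every bond `(x, x + r)` has the same deformed vector `F r`, so
the first variation of the energy is `∑_r Dφ(F r) (∑_x (v (x + r) - v x))`, the inner sum
running over the `x ∈ L` with `x + r ∈ L`. For each `r` the two halves of that sum are
translates of each other: both equal `∑_{x ∈ L} v x`, because `v` vanishes at the sites whose
`r`-neighbour on either side is missing. -/

open Finset

section Translation

variable {G M : Type*} [AddCommGroup G] [AddCommGroup M] [DecidableEq G]

theorem Finset.sum_filter_add_mem_comp_add (L : Finset G) (r : G) (g : G → M) :
    ∑ x ∈ L with x + r ∈ L, g (x + r) = ∑ z ∈ L with z - r ∈ L, g z :=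
  sum_nbij' (· + r) (· - r)
    (fun x hx => by simp_all)
    (fun z hz => by simp_all)
    (fun x _ => add_sub_cancel_right x r)
    (fun z _ => sub_add_cancel z r)
    (fun _ _ => rfl)

theorem Finset.sum_filter_add_mem_sub_eq_zero (L : Finset G) (r : G) (g : G → M)
    (hg : ∀ x ∈ L, (x + r ∉ L ∨ x - r ∉ L) → g x = 0) :
    ∑ x ∈ L with x + r ∈ L, (g (x + r) - g x) = 0 := by
  have hforward : ∑ x ∈ L with x + r ∈ L, g x = ∑ x ∈ L, g x :=
    sum_filter_of_ne fun x hx hgx => by_contra fun h => hgx (hg x hx (Or.inl h))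
  have hbackward : ∑ z ∈ L with z - r ∈ L, g z = ∑ z ∈ L, g z :=
    sum_filter_of_ne fun z hz hgz => by_contra fun h => hgz (hg z hz (Or.inr h))
  rw [sum_sub_distrib, sum_filter_add_mem_comp_add, hforward, hbackward, sub_self]

end Translation

theorem DifferentiableAt.hasDerivAt_sub_add_smul {E : Type*} [NormedAddCommGroup E]
    [NormedSpace ℝ E] {φ : E → ℝ} {a b u w : E} (h : DifferentiableAt ℝ φ (a - b)) :
    HasDerivAt (fun α : ℝ => φ ((a + α • u) - (b + α • w))) (fderiv ℝ φ (a - b) (u - w)) 0 := by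
  have hline : HasDerivAt (fun α : ℝ => (a + α • u) - (b + α • w)) (u - w) 0 := by
    simpa using (((hasDerivAt_id (0 : ℝ)).smul_const u).const_add a).fun_sub
      (((hasDerivAt_id (0 : ℝ)).smul_const w).const_add b)
  have hφ : HasFDerivAt φ (fderiv ℝ φ (a - b)) ((a + (0 : ℝ) • u) - (b + (0 : ℝ) • w)) := by
    simpa using h.hasFDerivAt
  exact hφ.comp_hasDerivAt 0 hline

theorem Matrix.mulVec_intCast_add_sub {d : ℕ} (F : Matrix (Fin d) (Fin d) ℝ)
    (x r : Fin d → ℤ) :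
    (F.mulVec fun i => ((x + r) i : ℝ)) - (F.mulVec fun i => (x i : ℝ)) =
      F.mulVec fun i => (r i : ℝ) := by
  have hcast : (fun i => ((x + r) i : ℝ)) = (fun i => (x i : ℝ)) + fun i => (r i : ℝ) := by
    funext i
    simp
  rw [hcast, Matrix.mulVec_add, add_sub_cancel_left]

theorem stmt17_general (d : ℕ) (R L : Finset (Fin d → ℤ))
    (F : Matrix (Fin d) (Fin d) ℝ) (φ : (Fin d → ℝ) → ℝ)
    (hφ : ∀ r ∈ R, DifferentiableAt ℝ φ (F.mulVec fun i => (r i : ℝ)))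
    (v : (Fin d → ℤ) → (Fin d → ℝ))
    (hv : ∀ x ∈ L, (∃ r ∈ R, x + r ∉ L ∨ x - r ∉ L) → v x = 0) :
    HasDerivAt (fun α : ℝ =>
        ∑ x ∈ L, ∑ r ∈ R.filter (fun r => x + r ∈ L),
          φ (((F.mulVec fun i => ((x + r) i : ℝ)) + α • v (x + r))
              - ((F.mulVec fun i => (x i : ℝ)) + α • v x)))
      0 0 := by
  set D := fun r : Fin d → ℤ => fderiv ℝ φ (F.mulVec fun i => (r i : ℝ))
  have hbond : ∀ x ∈ L, ∀ r ∈ R.filter (fun r => x + r ∈ L),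
      HasDerivAt (fun α : ℝ => φ (((F.mulVec fun i => ((x + r) i : ℝ)) + α • v (x + r))
          - ((F.mulVec fun i => (x i : ℝ)) + α • v x)))
        (D r (v (x + r) - v x)) 0 := by
    intro x _ r hr
    have hdiff := hφ r (mem_filter.mp hr).1
    rw [← F.mulVec_intCast_add_sub x r] at hdiff
    have h := hdiff.hasDerivAt_sub_add_smul (u := v (x + r)) (w := v x)
    rwa [F.mulVec_intCast_add_sub] at h
  have hzero : ∑ x ∈ L, ∑ r ∈ R.filter (fun r => x + r ∈ L), D r (v (x + r) - v x) = 0 := by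
    rw [sum_comm' (t' := R) (s' := fun r => L.filter (fun x => x + r ∈ L))
      (fun x r => by simp only [mem_filter]; tauto)]
    refine sum_eq_zero fun r hr => ?_
    simp_rw [map_sub]
    exact sum_filter_add_mem_sub_eq_zero L r (fun x => D r (v x))
      fun x hx hmissing => by rw [hv x hx ⟨r, hr, hmissing⟩, map_zero]
  simpa only [hzero] using HasDerivAt.fun_sum fun x hx => HasDerivAt.fun_sum (hbond x hx)

/-- The uniform deformation `y_F(x) = F·x` is an equilibrium of the atomistic two-body
model `E(y) = Σ_{x ∈ L} Σ_{r ∈ R, x+r ∈ L} φ(y(x+r) − y(x))`: for every displacement `v`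
vanishing at all sites `x ∈ L` having a neighbor direction `r ∈ R` with `x + r ∉ L` or
`x − r ∉ L`, the function `α ↦ E(y_F + α·v)` is differentiable at `α = 0` with
derivative `0`. -/
theorem stmt17 (d : ℕ) (hd : 1 ≤ d) (R L : Finset (Fin d → ℤ))
    (hR : ∀ r ∈ R, r ≠ 0)
    (F : Matrix (Fin d) (Fin d) ℝ) (φ : (Fin d → ℝ) → ℝ)
    (hφ : ∀ r ∈ R, DifferentiableAt ℝ φ (F.mulVec fun i => (r i : ℝ)))
    (v : (Fin d → ℤ) → (Fin d → ℝ))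
    (hv : ∀ x ∈ L, (∃ r ∈ R, x + r ∉ L ∨ x - r ∉ L) → v x = 0) :
    HasDerivAt (fun α : ℝ =>
        ∑ x ∈ L, ∑ r ∈ R.filter (fun r => x + r ∈ L),
          φ (((F.mulVec fun i => ((x + r) i : ℝ)) + α • v (x + r))
              - ((F.mulVec fun i => (x i : ℝ)) + α • v x)))
      0 0 :=
  stmt17_general d R L F φ hφ v hv
end
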